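/- Fix an integer k ≥ 2. For every limit ordinal α, hNil_k(α) = 2^α (ordinal exponentiation); i.e. the ordinal height of the set of finite k-branching trees with strictly decreasing ordinal labels < α, under the one-step extension relation, is 2^α. -/

import Mathlib

/-- Natural (Hessenberg) addition, as `Ordinal.nadd` was defined in Mathlib (Dec 2024). -/
noncomputable def Ordinal.nadd (a b : Ordinal.{u}) : Ordinal.{u} :=
  max (⨆ x : Set.Iio a, Order.succ (Ordinal.nadd x.1 b))
    (⨆ x : Set.Iio b, Order.succ (Ordinal.nadd a x.1))
termination_by (a, b)
decreasing_by
  · exact Prod.Lex.left _ _ x.2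
  · exact Prod.Lex.right _ x.2

/-- `nmulNat γ k` is the `k`-fold natural (Hessenberg) sum `γ ⊕ ⋯ ⊕ γ`. -/
noncomputable def nmulNat (γ : Ordinal) : ℕ → Ordinal
  | 0 => 0
  | n + 1 => Ordinal.nadd (nmulNat γ n) γ

/-- `hNil k α = sup { hNil k β * k + 1 : β < α }`, where `* k` is the `k`-fold natural sum. -/
noncomputable def hNil (k : ℕ) (α : Ordinal) : Ordinal :=
  ⨆ β : Set.Iio α, nmulNat (hNil k β.1) k + 1
termination_by α
decreasing_by exact β.2

/-!
The lower bound `2 ^ β ≤ hNil k β + 1` holds for every `β`: at successors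
`2 ^ (β + 1) = 2 ^ β + 2 ^ β`, and already two of the `k` natural summands of
`hNil k (β + 1)` dominate this sum. For the upper bound, every `ω ^ e` is closed under
natural addition, so along `ω * q + n` the values of `hNil k` stay below `ω ^ (q + 1)`;
hence `hNil k (ω * q) ≤ ω ^ q = 2 ^ (ω * q)`, and every limit ordinal has the form `ω * q`.
-/

open Ordinal Order Set

universe u

local infixl:65 " ♯ " => Ordinal.nadd

namespace Ordinal

theorem nadd_le_iff {a b c : Ordinal} :
    b ♯ c ≤ a ↔ (∀ b' < b, b' ♯ c < a) ∧ ∀ c' < c, b ♯ c' < a := by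
  rw [nadd, max_le_iff, Ordinal.iSup_le_iff, Ordinal.iSup_le_iff]
  simp only [Subtype.forall, mem_Iio, succ_le_iff]

theorem lt_nadd_iff {a b c : Ordinal} :
    a < b ♯ c ↔ (∃ b' < b, a ≤ b' ♯ c) ∨ ∃ c' < c, a ≤ b ♯ c' := by
  rw [nadd, lt_max_iff, Ordinal.lt_iSup_iff, Ordinal.lt_iSup_iff]
  simp only [Subtype.exists, mem_Iio, lt_succ_iff, exists_prop]

theorem nadd_lt_nadd_left {b c : Ordinal} (h : b < c) (a : Ordinal) : a ♯ b < a ♯ c :=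
  lt_nadd_iff.2 (.inr ⟨b, h, le_rfl⟩)

theorem nadd_lt_nadd_right {b c : Ordinal} (h : b < c) (a : Ordinal) : b ♯ a < c ♯ a :=
  lt_nadd_iff.2 (.inl ⟨b, h, le_rfl⟩)

theorem nadd_le_nadd {a b c d : Ordinal} (hab : a ≤ b) (hcd : c ≤ d) : a ♯ c ≤ b ♯ d := by
  have hleft : a ♯ c ≤ a ♯ d := hcd.eq_or_lt.elim (· ▸ le_rfl) (nadd_lt_nadd_left · a |>.le)
  have hright : a ♯ d ≤ b ♯ d := hab.eq_or_lt.elim (· ▸ le_rfl) (nadd_lt_nadd_right · d |>.le)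
  exact hleft.trans hright

@[simp]
theorem nadd_zero (a : Ordinal) : a ♯ 0 = a := by
  induction a using WellFoundedLT.induction with
  | _ a ih =>
    refine le_antisymm (nadd_le_iff.2 ⟨fun a' h => (ih a' h).trans_lt h, fun c h => ?_⟩) ?_
    · simp at h
    · by_contra! h
      exact (nadd_lt_nadd_right h 0).ne (ih _ h)

@[simp]
theorem zero_nadd (a : Ordinal) : 0 ♯ a = a := by
  induction a using WellFoundedLT.induction with
  | _ a ih =>
    refine le_antisymm (nadd_le_iff.2 ⟨fun c h => ?_, fun a' h => (ih a' h).trans_lt h⟩) ?_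
    · simp at h
    · by_contra! h
      exact (nadd_lt_nadd_left h 0).ne (ih _ h)

theorem add_le_nadd (a b : Ordinal) : a + b ≤ a ♯ b := by
  induction b using Ordinal.limitRecOn with
  | zero => simp
  | add_one b ih =>
    rw [← add_assoc, add_one_le_iff]
    exact ih.trans_lt (nadd_lt_nadd_left (lt_add_one b) a)
  | limit b hb ih =>
    rw [add_le_iff_of_isSuccLimit hb]
    exact fun d hd => (ih d hd).trans (nadd_le_nadd le_rfl hd.le)

theorem nadd_le_of_strictMonoOn {c : Ordinal} {F : Ordinal → Ordinal → Ordinal}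
    (hF₁ : ∀ b < c, StrictMonoOn (F · b) (Iio c)) (hF₂ : ∀ a < c, StrictMonoOn (F a) (Iio c)) :
    ∀ a < c, ∀ b < c, a ♯ b ≤ F a b := by
  intro a
  induction a using WellFoundedLT.induction with
  | _ a iha =>
  intro ha b
  induction b using WellFoundedLT.induction with
  | _ b ihb =>
  intro hb
  exact nadd_le_iff.2
    ⟨fun a' h => (iha a' h (h.trans ha) b hb).trans_lt (hF₁ b hb (h.trans ha) ha h),
      fun b' h => (ihb b' h (h.trans hb)).trans_lt (hF₂ a ha (h.trans hb) hb h)⟩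

theorem div_lt_div_or_mod_lt {a b : Ordinal} (h : a < b) (c : Ordinal) :
    a / c < b / c ∨ a / c = b / c ∧ a % c < b % c := by
  refine (div_le_left h.le c).lt_or_eq.imp_right fun hq => ⟨hq, ?_⟩
  rw [← div_add_mod a c, ← div_add_mod b c, hq] at h
  exact lt_of_add_lt_add_left h

theorem mul_add_lt_mul {a b c d : Ordinal} (hbc : b < c) (hd : d < a) : a * b + d < a * c :=
  calc a * b + d < a * b + a := add_lt_add_right hd _
    _ = a * succ b := (mul_succ a b).symm
    _ ≤ a * c := mul_le_mul_right (succ_le_of_lt hbc) a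

theorem IsPrincipal.nadd_mul_omega0 {P : Ordinal} (hP : IsPrincipal (· ♯ ·) P) :
    IsPrincipal (· ♯ ·) (P * ω) := by
  intro a b ha hb
  have hP0 : P ≠ 0 := by rintro rfl; simp at ha
  have hquot : ∀ x < P * ω, ∃ n : ℕ, x / P = n :=
    fun x hx => lt_omega0.1 ((lt_mul_iff_div_lt hP0).1 hx)
  have hrem : ∀ x y, x % P ♯ y % P < P := fun x y => hP (mod_lt x hP0) (mod_lt y hP0)
  -- strictly monotone in each argument because the quotients by `P` are finite
  let F : Ordinal → Ordinal → Ordinal := fun a b => P * (a / P + b / P) + (a % P ♯ b % P)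
  have hF₁ : ∀ b < P * ω, StrictMonoOn (F · b) (Iio (P * ω)) := by
    intro b hb a' ha' a ha h
    rcases div_lt_div_or_mod_lt h P with hq | ⟨hq, hr⟩
    · obtain ⟨n, hn⟩ := hquot b hb
      obtain ⟨m', hm'⟩ := hquot a' ha'
      obtain ⟨m, hm⟩ := hquot a ha
      refine (mul_add_lt_mul ?_ (hrem a' b)).trans_le le_self_add
      rw [hm', hm] at hq ⊢
      rw [hn]
      exact_mod_cast Nat.add_lt_add_right (by exact_mod_cast hq) n
    · simp only [F, hq]
      exact add_lt_add_right (nadd_lt_nadd_right hr _) _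
  have hF₂ : ∀ a < P * ω, StrictMonoOn (F a) (Iio (P * ω)) := by
    intro a ha b' hb' b hb h
    rcases div_lt_div_or_mod_lt h P with hq | ⟨hq, hr⟩
    · exact (mul_add_lt_mul (add_lt_add_right hq _) (hrem a b')).trans_le le_self_add
    · simp only [F, hq]
      exact add_lt_add_right (nadd_lt_nadd_left hr _) _
  obtain ⟨m, hm⟩ := hquot a ha
  obtain ⟨n, hn⟩ := hquot b hb
  calc a ♯ b ≤ F a b := nadd_le_of_strictMonoOn hF₁ hF₂ a ha b hb
    _ < P * ω :=
      mul_add_lt_mul (by rw [hm, hn]; exact_mod_cast natCast_lt_omega0 (m + n)) (hrem a b)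

theorem isPrincipal_nadd_omega0_opow (e : Ordinal) : IsPrincipal (· ♯ ·) (ω ^ e) := by
  induction e using Ordinal.limitRecOn with
  | zero =>
    intro a b ha hb
    simp_all
  | add_one e ih =>
    rw [← succ_eq_add_one, opow_succ]
    exact ih.nadd_mul_omega0
  | limit e he ih =>
    intro a b ha hb
    obtain ⟨f, hf, ha⟩ := (lt_opow_of_isSuccLimit omega0_ne_zero he).1 ha
    obtain ⟨f', hf', hb⟩ := (lt_opow_of_isSuccLimit omega0_ne_zero he).1 hb
    have hmono : Monotone (ω ^ · : Ordinal → Ordinal) := fun _ _ => opow_le_opow_right omega0_pos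
    exact (ih _ (max_lt hf hf') (ha.trans_le (hmono (le_max_left f f')))
      (hb.trans_le (hmono (le_max_right f f')))).trans_le (hmono (max_lt hf hf').le)

theorem one_add_le_add_one (x : Ordinal) : 1 + x ≤ x + 1 := by
  rcases lt_or_ge x ω with hx | hx
  · obtain ⟨n, rfl⟩ := lt_omega0.1 hx
    exact (Nat.cast_add_one_comm n).ge
  · rw [one_add_of_omega0_le hx]
    exact le_self_add

theorem two_opow_omega0_mul (q : Ordinal) : (2 : Ordinal) ^ (ω * q) = ω ^ q := by
  rw [opow_mul, ← Nat.cast_ofNat, natCast_opow_omega0 one_lt_two]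

end Ordinal

theorem nmulNat_mono_left (n : ℕ) : Monotone (nmulNat · n) := by
  intro γ δ h
  induction n with
  | zero => rfl
  | succ n ih => exact nadd_le_nadd ih h

theorem nmulNat_mono_right (γ : Ordinal) : Monotone (nmulNat γ) :=
  monotone_nat_of_le_succ fun n => le_self_add.trans (add_le_nadd (nmulNat γ n) γ)

theorem le_nmulNat (γ : Ordinal) {n : ℕ} (hn : 1 ≤ n) : γ ≤ nmulNat γ n := by
  simpa [nmulNat] using nmulNat_mono_right γ hn

theorem add_self_le_nmulNat (γ : Ordinal) {n : ℕ} (hn : 2 ≤ n) : γ + γ ≤ nmulNat γ n :=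
  (add_le_nadd γ γ).trans (by simpa [nmulNat] using nmulNat_mono_right γ hn)

theorem Ordinal.IsPrincipal.nmulNat_lt {P γ : Ordinal} (hP : IsPrincipal (· ♯ ·) P)
    (hγ : γ < P) (n : ℕ) : nmulNat γ n < P := by
  induction n with
  | zero => exact zero_le.trans_lt hγ
  | succ n ih => exact hP ih hγ

section hNil

variable {k : ℕ}

theorem le_hNil {α β : Ordinal.{u}} (h : β < α) :
    nmulNat (hNil.{u, u} k β) k + 1 ≤ hNil k α := by
  conv_rhs => rw [hNil]
  exact le_ciSup bddAbove_of_small (⟨β, h⟩ : Iio α)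

theorem hNil_le {α c : Ordinal.{u}} (h : ∀ β < α, nmulNat (hNil.{u, u} k β) k + 1 ≤ c) :
    hNil k α ≤ c := by
  rw [hNil]
  exact Ordinal.iSup_le fun β => h β.1 β.2

theorem hNil_mono : Monotone (hNil.{u, u} k) :=
  fun _ _ h => hNil_le fun _ hγ => le_hNil (hγ.trans_le h)

theorem hNil_succ (β : Ordinal.{u}) : hNil.{u, u} k (succ β) = nmulNat (hNil k β) k + 1 :=
  (hNil_le fun _ hγ => add_le_add_left (nmulNat_mono_left k (hNil_mono (lt_succ_iff.1 hγ))) 1)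
    |>.antisymm (le_hNil (lt_succ β))

theorem two_opow_le_hNil_of_isSuccLimit (hk : 1 ≤ k) {α : Ordinal.{u}} (hα : IsSuccLimit α)
    (h : ∀ γ < α, 2 ^ γ ≤ hNil.{u, u} k γ + 1) : 2 ^ α ≤ hNil k α := by
  rw [opow_le_of_isSuccLimit two_ne_zero hα]
  intro γ hγ
  calc (2 : Ordinal) ^ γ ≤ hNil k γ + 1 := h γ hγ
    _ ≤ nmulNat (hNil k γ) k + 1 := by grw [← le_nmulNat _ hk]
    _ ≤ hNil k α := le_hNil hγ

theorem two_opow_le_hNil_add_one (hk : 2 ≤ k) (β : Ordinal.{u}) :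
    2 ^ β ≤ hNil.{u, u} k β + 1 := by
  induction β using Ordinal.limitRecOn with
  | zero => simp
  | add_one β ih =>
    set h := hNil k β
    rw [← succ_eq_add_one, opow_succ, Ordinal.mul_two, hNil_succ]
    calc (2 : Ordinal) ^ β + 2 ^ β ≤ (h + 1) + (h + 1) := add_le_add ih ih
      _ = h + (1 + h) + 1 := by simp only [add_assoc]
      _ ≤ h + (h + 1) + 1 := by grw [one_add_le_add_one]
      _ = (h + h) + 1 + 1 := by simp only [add_assoc]
      _ ≤ nmulNat h k + 1 + 1 := by grw [add_self_le_nmulNat h hk]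
  | limit β hβ ih =>
    exact (two_opow_le_hNil_of_isSuccLimit (by omega) hβ ih).trans le_self_add

theorem hNil_omega0_mul_add_lt {q : Ordinal.{u}} (hq : hNil.{u, u} k (ω * q) ≤ ω ^ q) (n : ℕ) :
    hNil k (ω * q + n) < ω ^ succ q := by
  induction n with
  | zero => simpa using hq.trans_lt ((opow_lt_opow_iff_right one_lt_omega0).2 (lt_succ q))
  | succ n ih =>
    rw [Nat.cast_succ, ← add_assoc, ← succ_eq_add_one, hNil_succ, ← succ_eq_add_one]
    exact (isSuccLimit_opow_left isSuccLimit_omega0 (zero_le.trans_lt (lt_succ q)).ne').succ_lt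
      ((isPrincipal_nadd_omega0_opow _).nmulNat_lt ih k)

theorem hNil_omega0_mul_le (q : Ordinal.{u}) : hNil.{u, u} k (ω * q) ≤ ω ^ q := by
  induction q using WellFoundedLT.induction with
  | _ q ih =>
  refine hNil_le fun γ hγ => ?_
  obtain ⟨n, hn⟩ := lt_omega0.1 (mod_lt γ omega0_ne_zero)
  have hγq : γ / ω < q := (lt_mul_iff_div_lt omega0_ne_zero).1 hγ
  have hsucc : succ γ = ω * (γ / ω) + (n + 1 : ℕ) := by
    rw [Nat.cast_succ, ← add_assoc, ← hn, div_add_mod, ← succ_eq_add_one]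
  rw [← hNil_succ, hsucc]
  exact ((hNil_omega0_mul_add_lt (ih _ hγq) (n + 1)).trans_le
    (opow_le_opow_right omega0_pos (succ_le_of_lt hγq))).le

end hNil

/-- for `k ≥ 2` and every limit ordinal `α`, `hNil k α = 2^α`
(ordinal exponentiation), i.e. the ordinal height of the set of finite `k`-branching trees
with strictly decreasing ordinal labels `< α` under one-step extension is `2^α`. -/
theorem stmt_11 (k : ℕ) (hk : 2 ≤ k) (α : Ordinal) (hα : Order.IsSuccLimit α) :
    hNil k α = (2 : Ordinal) ^ α := by
  obtain ⟨q, rfl⟩ := isSuccPrelimit_iff_omega0_dvd.1 hα.isSuccPrelimit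
  refine le_antisymm ?_ (two_opow_le_hNil_of_isSuccLimit (by omega) hα
    fun γ _ => two_opow_le_hNil_add_one hk γ)
  rw [two_opow_omega0_mul]
  exact hNil_omega0_mul_le q
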